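/- arXiv:2407.00971 — 2 statements merged into one kernel-verified Lean document; each statement's English description precedes it below -/
import Mathlib

section
/- Let λ be a Young diagram with n cells and let σ be a standard Young tableau of shape λ. Then in ℚ(q,t) one has ∏_{j=1}^n Ω⁰( q t χ_j − (1−q)(1−t)·Σ_{1≤i<j} χ_j/χ_i ) = g_λ · ( (1−qt)/((1−q)(1−t)) )^n · ∏_{j=1}^n Ω⁰( −χ_j^{−1} + (1−q)(1−t)·Σ_{1≤i<j} χ_i/χ_j ), where χ_j/χ_i denotes the Laurent monomial q^{a′_j−a′_i} t^{l′_j−l′_i} and χ_j^{−1} = q^{−a′_j} t^{−l′_j}. -/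
open scoped Classical

noncomputable section

/-- The field `ℚ(q,t)` of rational functions in two variables over `ℚ`. -/
abbrev K : Type := FractionRing (MvPolynomial (Fin 2) ℚ)

def q : K := algebraMap (MvPolynomial (Fin 2) ℚ) K (MvPolynomial.X 0)
def t : K := algebraMap (MvPolynomial (Fin 2) ℚ) K (MvPolynomial.X 1)

/-- The Laurent monomial `q^i t^j` with integer exponents. -/
def monK (i j : ℤ) : K := q ^ i * t ^ j

/-- `Ω⁰` of a Laurent polynomial, given by its (finitely supported) coefficient
function `P : ℤ × ℤ →₀ ℤ`: the product `∏_{(i,j) ≠ (0,0)} (1 - q^i t^j)^{c_{ij}}`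
(the constant coefficient is ignored). -/
def Omega0 (P : (ℤ × ℤ) →₀ ℤ) : K :=
  ∏ p ∈ P.support.erase (0, 0), (1 - monK p.1 p.2) ^ P p

/-- The coefficient function of the Laurent monomial `q^i t^j`. -/
def lmono (i j : ℤ) : (ℤ × ℤ) →₀ ℤ := Finsupp.single (i, j) 1

/-- The coefficient function of the Laurent polynomial `(1-q)(1-t) · q^u t^v`. -/
def quadr (u v : ℤ) : (ℤ × ℤ) →₀ ℤ :=
  lmono u v - lmono (u + 1) v - lmono u (v + 1) + lmono (u + 1) (v + 1)

/-- A Young diagram: a finite set of cells in `ℕ × ℕ` closed under decreasing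
either coordinate. -/
def IsYoung (μ : Finset (ℕ × ℕ)) : Prop :=
  ∀ a b a' b', (a, b) ∈ μ → a' ≤ a → b' ≤ b → (a', b') ∈ μ

/-- The arm of the cell `x` in `μ`: cells of `μ` in the same row strictly to the right. -/
def arm (μ : Finset (ℕ × ℕ)) (x : ℕ × ℕ) : ℕ :=
  (μ.filter fun y => y.2 = x.2 ∧ x.1 < y.1).card

/-- The leg of the cell `x` in `μ`: cells of `μ` in the same column strictly above. -/
def leg (μ : Finset (ℕ × ℕ)) (x : ℕ × ℕ) : ℕ :=
  (μ.filter fun y => y.1 = x.1 ∧ x.2 < y.2).card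

/-- `g_μ = ∏_{x∈μ} (1 - q^{a(x)+1} t^{-l(x)}) (1 - q^{-a(x)} t^{l(x)+1})`. -/
def gPoly (μ : Finset (ℕ × ℕ)) : K :=
  ∏ x ∈ μ,
    ((1 - monK ((arm μ x : ℤ) + 1) (-(leg μ x : ℤ))) *
      (1 - monK (-(arm μ x : ℤ)) ((leg μ x : ℤ) + 1)))

variable {n : ℕ} {lam : Finset (ℕ × ℕ)}

/-- The coarm (as an integer) of the cell labeled `i+1` in the tableau `σ`. -/
def cx (σ : Fin n → {x // x ∈ lam}) (i : Fin n) : ℤ := ((σ i).val.1 : ℤ)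

/-- The coleg (as an integer) of the cell labeled `i+1` in the tableau `σ`. -/
def cy (σ : Fin n → {x // x ∈ lam}) (i : Fin n) : ℤ := ((σ i).val.2 : ℤ)

/-- A standard Young tableau of shape `lam`, encoded as the bijection sending the
label `i+1` (for `i : Fin n`) to its cell: labels strictly increase along rows
(increasing coarm) and along columns (increasing coleg). -/
def IsSYT (σ : Fin n → {x // x ∈ lam}) : Prop :=
  Function.Bijective σ ∧
    (∀ i j : Fin n, (σ i).val.2 = (σ j).val.2 → (σ i).val.1 < (σ j).val.1 → i < j) ∧
    (∀ i j : Fin n, (σ i).val.1 = (σ j).val.1 → (σ i).val.2 < (σ j).val.2 → i < j)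

/-!
`Omega0` turns sums of exponents into products, so it suffices to compare exponents in
`ℤ[q^±1, t^±1]`. Summed over `j`, the terms `χ_j/χ_i` (`i < j`) of the left side and `χ_i/χ_j`
of the right side together run over all off-diagonal pairs, whatever the order of the labels.
With `B = Σ_{x∈λ} q^{a'(x)} t^{l'(x)}` the comparison therefore reduces to the hook formula
  `Σ_{x∈λ} (q^{a(x)+1} t^{-l(x)} + q^{-a(x)} t^{l(x)+1}) = qt B + B̄ - (1-q)(1-t) B B̄`,
the `n` diagonal pairs contributing `n (1-q)(1-t)`, i.e. the factor `((1-qt)/((1-q)(1-t)))^n`.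

The hook formula is proved by induction, adding a first column of height `a` to a diagram
shifted one step to the right. The new cell at height `k` has leg `a-1-k` and arm the length
`r_k` of row `k` of the old diagram, so the new hook terms involve the `r_k` only through
`Σ_k q^{r_k} t^k` and `Σ_k q^{-r_k} t^{-k}`; these are also what telescoping `(1-q) B` and
`(1-q) B̄` of the old diagram produces, and they cancel.
-/

open Finset

lemma q_pow_mul_t_pow_injective {a b c d : ℕ} (h : q ^ a * t ^ b = q ^ c * t ^ d) :
    a = c ∧ b = d := by
  have hX : (MvPolynomial.X 0 ^ a * MvPolynomial.X 1 ^ b : MvPolynomial (Fin 2) ℚ) =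
      MvPolynomial.X 0 ^ c * MvPolynomial.X 1 ^ d :=
    IsFractionRing.injective _ K (by simpa [q, t] using h)
  simp only [MvPolynomial.X_pow_eq_monomial, MvPolynomial.monomial_mul, one_mul] at hX
  have hexp := MvPolynomial.monomial_left_injective one_ne_zero hX
  exact ⟨by simpa using congr($hexp 0), by simpa using congr($hexp 1)⟩

lemma monK_ne_one {i j : ℤ} (hij : (i, j) ≠ (0, 0)) : monK i j ≠ 1 := by
  have hq : q ≠ 0 := by simp [q, MvPolynomial.X_ne_zero]
  have ht : t ≠ 0 := by simp [t, MvPolynomial.X_ne_zero]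
  intro h1
  -- split the exponents into positive and negative parts to land in `ℚ[q, t]`
  have key :
      q ^ (i.toNat : ℤ) * t ^ (j.toNat : ℤ) =
        q ^ ((-i).toNat : ℤ) * t ^ ((-j).toNat : ℤ) := by
    rw [show (i.toNat : ℤ) = i + (-i).toNat by omega,
      show (j.toNat : ℤ) = j + (-j).toNat by omega, zpow_add₀ hq, zpow_add₀ ht]
    simp only [monK] at h1
    linear_combination (q ^ ((-i).toNat : ℤ) * t ^ ((-j).toNat : ℤ)) * h1
  simp only [zpow_natCast] at key
  obtain ⟨h1, h2⟩ := q_pow_mul_t_pow_injective key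
  exact hij (by ext <;> simp <;> omega)

lemma one_sub_monK_ne_zero {i j : ℤ} (hij : (i, j) ≠ (0, 0)) : 1 - monK i j ≠ 0 :=
  sub_ne_zero.2 (monK_ne_one hij).symm

lemma Omega0_eq_prod (P : (ℤ × ℤ) →₀ ℤ) :
    Omega0 P = P.prod fun p k => if p = (0, 0) then 1 else (1 - monK p.1 p.2) ^ k := by
  rw [Omega0, Finsupp.prod, ← prod_erase P.support (a := (0, 0))
    (f := fun p => if p = (0, 0) then 1 else (1 - monK p.1 p.2) ^ P p) (by simp)]
  exact prod_congr rfl fun p hp => by rw [if_neg (ne_of_mem_erase hp)]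

lemma Omega0_sum {ι : Type*} (s : Finset ι) (P : ι → (ℤ × ℤ) →₀ ℤ) :
    Omega0 (∑ i ∈ s, P i) = ∏ i ∈ s, Omega0 (P i) := by
  simp only [Omega0_eq_prod]
  refine (Finsupp.prod_finsetSum_index (fun _ => by split_ifs <;> simp) fun p k l => ?_).symm
  split_ifs with hp
  · simp
  · exact zpow_add₀ (one_sub_monK_ne_zero hp) k l

lemma Omega0_add (P P' : (ℤ × ℤ) →₀ ℤ) : Omega0 (P + P') = Omega0 P * Omega0 P' := by
  simpa using Omega0_sum univ ![P, P']

lemma Omega0_neg (P : (ℤ × ℤ) →₀ ℤ) : Omega0 (-P) = (Omega0 P)⁻¹ :=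
  eq_inv_of_mul_eq_one_left (by rw [← Omega0_add, neg_add_cancel]; simp [Omega0])

lemma Omega0_sub (P P' : (ℤ × ℤ) →₀ ℤ) : Omega0 (P - P') = Omega0 P / Omega0 P' := by
  rw [sub_eq_add_neg, Omega0_add, Omega0_neg, div_eq_mul_inv]

lemma Omega0_lmono {i j : ℤ} (hij : (i, j) ≠ (0, 0)) : Omega0 (lmono i j) = 1 - monK i j := by
  rw [Omega0, lmono, Finsupp.support_single _ one_ne_zero,
    erase_eq_of_notMem (by simpa using hij.symm)]
  simp

lemma Omega0_lmono_zero : Omega0 (lmono 0 0) = 1 := by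
  simp [Omega0, lmono]

lemma Omega0_quadr_zero : Omega0 (quadr 0 0) = (1 - q * t) / ((1 - q) * (1 - t)) := by
  rw [quadr, Omega0_add, Omega0_sub, Omega0_sub, Omega0_lmono_zero, zero_add,
    Omega0_lmono (by simp), Omega0_lmono (by simp), Omega0_lmono (by simp)]
  simp only [monK, zpow_one, zpow_zero, mul_one, one_mul]
  rw [div_div]
  ring

lemma Omega0_armLeg_eq_gPoly (μ : Finset (ℕ × ℕ)) :
    Omega0 (∑ x ∈ μ, (lmono ((arm μ x : ℤ) + 1) (-(leg μ x : ℤ)) +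
        lmono (-(arm μ x : ℤ)) ((leg μ x : ℤ) + 1))) = gPoly μ := by
  rw [Omega0_sum, gPoly]
  refine prod_congr rfl fun x _ => ?_
  rw [Omega0_add, Omega0_lmono (by simp; omega), Omega0_lmono (by simp; omega)]

abbrev ZLaurent : Type := AddMonoidAlgebra ℤ (ℤ × ℤ)

def mon (i j : ℤ) : ZLaurent := AddMonoidAlgebra.single (i, j) 1

lemma mon_mul (i j k l : ℤ) : mon i j * mon k l = mon (i + k) (j + l) := by
  simp [mon, AddMonoidAlgebra.single_mul_single]

lemma mon_zero_zero : mon 0 0 = 1 := AddMonoidAlgebra.one_def.symm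

lemma ofCoeff_lmono (i j : ℤ) : AddMonoidAlgebra.ofCoeff (lmono i j) = mon i j := rfl

lemma ofCoeff_quadr (u v : ℤ) :
    AddMonoidAlgebra.ofCoeff (quadr u v) = mon u v * ((1 - mon 1 0) * (1 - mon 0 1)) := by
  simp only [quadr, AddMonoidAlgebra.ofCoeff_add, AddMonoidAlgebra.ofCoeff_sub, ofCoeff_lmono,
    mul_sub, sub_mul, mul_one, one_mul, mon_mul]
  ring_nf

lemma one_sub_mon_mul_sum_range (u v i j : ℤ) (h : ℕ) :
    (1 - mon u v) * ∑ c ∈ range h, mon (i + c * u) (j + c * v) =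
      mon i j - mon (i + h * u) (j + h * v) := by
  rw [mul_sum]
  convert sum_range_sub' (fun c : ℕ => mon (i + c * u) (j + c * v)) h using 1
  · refine sum_congr rfl fun c _ => ?_
    rw [sub_mul, one_mul, mon_mul]
    push_cast
    ring_nf
  · simp

lemma one_sub_mon_mul_sum_range_neg (u v i j : ℤ) (h : ℕ) :
    (1 - mon u v) * ∑ c ∈ range h, mon (i - c * u) (j - c * v) =
      mon (i + u - h * u) (j + v - h * v) - mon (i + u) (j + v) := by
  rw [mul_sum]
  convert sum_range_sub (fun c : ℕ => mon (i + u - c * u) (j + v - c * v)) h using 1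
  · refine sum_congr rfl fun c _ => ?_
    rw [sub_mul, one_mul, mon_mul]
    push_cast
    ring_nf
  · simp

def cellSum (μ : Finset (ℕ × ℕ)) : ZLaurent := ∑ x ∈ μ, mon x.1 x.2

def cellSumInv (μ : Finset (ℕ × ℕ)) : ZLaurent := ∑ x ∈ μ, mon (-x.1) (-x.2)

def hookTerm (a l : ℕ) : ZLaurent := mon (a + 1) (-l) + mon (-a) (l + 1)

def hookSum (μ : Finset (ℕ × ℕ)) : ZLaurent := ∑ x ∈ μ, hookTerm (arm μ x) (leg μ x)

-- A row of a Mathlib `YoungDiagram` has fixed first coordinate, so it is a column here: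
-- `cellsOfRowLens (a :: ws)` puts a column of height `a` to the left of the diagram of `ws`,
-- and `colLen k` is the length of row `k`.
lemma sum_cellsOfRowLens_cons {M : Type*} [AddCommMonoid M] (a : ℕ) (ws : List ℕ)
    (f : ℕ × ℕ → M) :
    ∑ y ∈ YoungDiagram.cellsOfRowLens (a :: ws), f y =
      ∑ k ∈ range a, f (0, k) + ∑ y ∈ YoungDiagram.cellsOfRowLens ws, f (y.1 + 1, y.2) := by
  rw [YoungDiagram.cellsOfRowLens, sum_union, sum_product, sum_singleton, sum_map]
  · rfl
  · rw [disjoint_left]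
    rintro y hy hy'
    simp only [mem_product, mem_singleton, mem_map] at hy hy'
    obtain ⟨x, -, rfl⟩ := hy'
    simp at hy

lemma card_filter_cellsOfRowLens_cons (a : ℕ) (ws : List ℕ) (p : ℕ × ℕ → Prop)
    [DecidablePred p] :
    #{y ∈ YoungDiagram.cellsOfRowLens (a :: ws) | p y} =
      #{k ∈ range a | p (0, k)} + #{y ∈ YoungDiagram.cellsOfRowLens ws | p (y.1 + 1, y.2)} := by
  simp only [card_filter, sum_cellsOfRowLens_cons]

lemma arm_cellsOfRowLens_cons_succ (a : ℕ) (ws : List ℕ) (i j : ℕ) :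
    arm (YoungDiagram.cellsOfRowLens (a :: ws)) (i + 1, j) =
      arm (YoungDiagram.cellsOfRowLens ws) (i, j) := by
  simp [arm, card_filter_cellsOfRowLens_cons]

lemma leg_cellsOfRowLens_cons_succ (a : ℕ) (ws : List ℕ) (i j : ℕ) :
    leg (YoungDiagram.cellsOfRowLens (a :: ws)) (i + 1, j) =
      leg (YoungDiagram.cellsOfRowLens ws) (i, j) := by
  simp [leg, card_filter_cellsOfRowLens_cons]

lemma arm_cellsOfRowLens_cons_zero (a : ℕ) {ws : List ℕ} (hws : ws.SortedGE) (k : ℕ) :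
    arm (YoungDiagram.cellsOfRowLens (a :: ws)) (0, k) =
      (YoungDiagram.ofRowLens ws hws).colLen k := by
  simp [YoungDiagram.colLen_eq_card, arm, card_filter_cellsOfRowLens_cons, YoungDiagram.col,
    YoungDiagram.ofRowLens]

lemma leg_cellsOfRowLens_cons_zero (a : ℕ) (ws : List ℕ) (k : ℕ) :
    leg (YoungDiagram.cellsOfRowLens (a :: ws)) (0, k) = a - (k + 1) := by
  have hIoo : {j ∈ range a | k < j} = Ioo k a := by ext; simp [and_comm]
  simp [leg, card_filter_cellsOfRowLens_cons, hIoo, Nat.sub_sub]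

lemma cellSum_cellsOfRowLens_cons (a : ℕ) (ws : List ℕ) :
    cellSum (YoungDiagram.cellsOfRowLens (a :: ws)) =
      ∑ k ∈ range a, mon 0 k + mon 1 0 * cellSum (YoungDiagram.cellsOfRowLens ws) := by
  simp only [cellSum, sum_cellsOfRowLens_cons, mul_sum, mon_mul]
  push_cast
  ring_nf

lemma cellSumInv_cellsOfRowLens_cons (a : ℕ) (ws : List ℕ) :
    cellSumInv (YoungDiagram.cellsOfRowLens (a :: ws)) =
      ∑ k ∈ range a, mon 0 (-k) + mon (-1) 0 * cellSumInv (YoungDiagram.cellsOfRowLens ws) := by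
  simp only [cellSumInv, sum_cellsOfRowLens_cons, mul_sum, mon_mul]
  push_cast
  ring_nf

lemma hookSum_cellsOfRowLens_cons (a : ℕ) {ws : List ℕ} (hws : ws.SortedGE) :
    hookSum (YoungDiagram.cellsOfRowLens (a :: ws)) =
      ∑ k ∈ range a, hookTerm ((YoungDiagram.ofRowLens ws hws).colLen k) (a - (k + 1)) +
        hookSum (YoungDiagram.cellsOfRowLens ws) := by
  simp only [hookSum, sum_cellsOfRowLens_cons, arm_cellsOfRowLens_cons_zero a hws,
    leg_cellsOfRowLens_cons_zero, arm_cellsOfRowLens_cons_succ, leg_cellsOfRowLens_cons_succ]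

lemma sum_hookTerm_row (r : ℕ → ℕ) (a : ℕ) :
    ∑ k ∈ range a, hookTerm (r k) (a - (k + 1)) =
      mon 1 0 * mon 0 (1 - a) * ∑ k ∈ range a, mon (r k) k +
        mon 0 a * ∑ k ∈ range a, mon (-r k) (-k) := by
  simp only [mul_sum, ← sum_add_distrib, mon_mul]
  refine sum_congr rfl fun k hk => ?_
  rw [hookTerm, Nat.cast_sub (mem_range.1 hk)]
  push_cast
  ring_nf

lemma sum_cells_eq_sum_colLen {M : Type*} [AddCommMonoid M] (D : YoungDiagram) {a : ℕ}
    (ha : ∀ y ∈ D, y.2 < a) (f : ℕ × ℕ → M) :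
    ∑ y ∈ D.cells, f y = ∑ k ∈ range a, ∑ i ∈ range (D.colLen k), f (i, k) := by
  rw [← sum_fiberwise_of_maps_to (g := Prod.snd) (t := range a)
    fun y hy => mem_range.2 (ha y hy)]
  refine sum_congr rfl fun k _ => ?_
  rw [← YoungDiagram.col, YoungDiagram.col_eq_prod, sum_product]
  simp only [sum_singleton]

lemma one_sub_mon_mul_cellSum (D : YoungDiagram) {a : ℕ} (ha : ∀ y ∈ D, y.2 < a) :
    (1 - mon 1 0) * cellSum D.cells =
      ∑ k ∈ range a, mon 0 k - ∑ k ∈ range a, mon (D.colLen k) k := by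
  rw [cellSum, sum_cells_eq_sum_colLen D ha, mul_sum, ← sum_sub_distrib]
  refine sum_congr rfl fun k _ => ?_
  simpa using one_sub_mon_mul_sum_range 1 0 0 k (D.colLen k)

lemma one_sub_mon_mul_cellSumInv (D : YoungDiagram) {a : ℕ} (ha : ∀ y ∈ D, y.2 < a) :
    (1 - mon 1 0) * cellSumInv D.cells =
      mon 1 0 * (∑ k ∈ range a, mon (-D.colLen k) (-k) - ∑ k ∈ range a, mon 0 (-k)) := by
  rw [cellSumInv, sum_cells_eq_sum_colLen D ha, mul_sum, ← sum_sub_distrib, mul_sum]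
  refine sum_congr rfl fun k _ => ?_
  rw [mul_sub, mon_mul, mon_mul]
  simpa [sub_eq_add_neg, add_comm] using one_sub_mon_mul_sum_range_neg 1 0 0 (-k) (D.colLen k)

theorem hookSum_cellsOfRowLens {w : List ℕ} (hw : w.SortedGE) :
    hookSum (YoungDiagram.cellsOfRowLens w) =
      mon 1 1 * cellSum (YoungDiagram.cellsOfRowLens w) +
        cellSumInv (YoungDiagram.cellsOfRowLens w) -
          (1 - mon 1 0) * (1 - mon 0 1) * cellSum (YoungDiagram.cellsOfRowLens w) *
            cellSumInv (YoungDiagram.cellsOfRowLens w) := by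
  induction w with
  | nil => simp [hookSum, cellSum, cellSumInv, YoungDiagram.cellsOfRowLens]
  | cons a ws ih =>
    obtain ⟨hle, hws⟩ : (∀ x ∈ ws, a ≥ x) ∧ ws.SortedGE := by
      simpa [List.sortedGE_iff_pairwise] using hw
    have hD : ∀ y ∈ YoungDiagram.ofRowLens ws hws, y.2 < a := fun y hy => by
      obtain ⟨hy1, hy2⟩ := YoungDiagram.mem_ofRowLens.1 hy
      exact hy2.trans_le (hle _ (List.getElem_mem hy1))
    have hL : (1 - mon 0 1) * ∑ k ∈ range a, mon 0 k = 1 - mon 0 a := by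
      simpa [mon_zero_zero] using one_sub_mon_mul_sum_range 0 1 0 0 a
    have hLbar : (1 - mon 0 1) * ∑ k ∈ range a, mon 0 (-k) = mon 0 (1 - a) - mon 0 1 := by
      simpa using one_sub_mon_mul_sum_range_neg 0 1 0 0 a
    have hcells : (YoungDiagram.ofRowLens ws hws).cells = YoungDiagram.cellsOfRowLens ws := rfl
    have hB := one_sub_mon_mul_cellSum _ hD
    have hBbar := one_sub_mon_mul_cellSumInv _ hD
    rw [hcells] at hB hBbar
    have hqq : mon 1 0 * mon (-1) 0 = 1 := by rw [mon_mul]; simpa using mon_zero_zero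
    have hqt : mon 1 1 = mon 1 0 * mon 0 1 := by rw [mon_mul]; simp
    rw [hookSum_cellsOfRowLens_cons a hws, sum_hookTerm_row, cellSum_cellsOfRowLens_cons,
      cellSumInv_cellsOfRowLens_cons, ih hws, hqt]
    generalize ∑ k ∈ range a, mon 0 k = L at *
    generalize ∑ k ∈ range a, mon 0 (-k) = Lbar at *
    generalize ∑ k ∈ range a, mon ((YoungDiagram.ofRowLens ws hws).colLen k) k = S at *
    generalize ∑ k ∈ range a, mon (-(YoungDiagram.ofRowLens ws hws).colLen k) (-k) = Sbar at *
    generalize cellSum (YoungDiagram.cellsOfRowLens ws) = B at *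
    generalize cellSumInv (YoungDiagram.cellsOfRowLens ws) = Bbar at *
    linear_combination
      ((1 - mon 1 0) * (1 - mon 0 1) * B * Bbar + (1 - mon 0 1) * L * (Sbar - Lbar) -
          (Sbar - Lbar) - Bbar) * hqq +
        (mon 1 0 * mon 0 1 + mon 1 0 * (1 - mon 0 1) * Lbar) * hB +
        (mon (-1) 0 * (1 - mon 0 1) * L - mon (-1) 0) * hBbar + Sbar * hL - mon 1 0 * S * hLbar

theorem hookSum_eq_of_isYoung {μ : Finset (ℕ × ℕ)} (hY : IsYoung μ) :
    hookSum μ = mon 1 1 * cellSum μ + cellSumInv μ -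
      (1 - mon 1 0) * (1 - mon 0 1) * cellSum μ * cellSumInv μ := by
  let D : YoungDiagram := ⟨μ, fun x y hyx hx => hY x.1 x.2 y.1 y.2 hx hyx.1 hyx.2⟩
  have hμ : μ = YoungDiagram.cellsOfRowLens D.rowLens :=
    congrArg YoungDiagram.cells (YoungDiagram.ofRowLens_to_rowLens_eq_self (μ := D)).symm
  rw [hμ]
  exact hookSum_cellsOfRowLens D.rowLens_sorted

lemma sum_sum_lt_add_sum_sum_lt {ι M : Type*} [Fintype ι] [LinearOrder ι] [AddCommMonoid M]
    (f : ι → ι → M) :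
    ∑ j, ∑ i ∈ univ.filter (· < j), f j i + ∑ j, ∑ i ∈ univ.filter (· < j), f i j +
        ∑ j, f j j = ∑ i, ∑ j, f i j := by
  simp only [sum_filter]
  rw [sum_comm (f := fun j i => if i < j then f i j else 0), ← sum_add_distrib,
    ← sum_add_distrib]
  refine sum_congr rfl fun i _ => ?_
  rw [show f i i = ∑ j, if i = j then f i j else 0 by simp, ← sum_add_distrib,
    ← sum_add_distrib]
  refine sum_congr rfl fun j _ => ?_
  rcases lt_trichotomy i j with h | rfl | h
  · simp [h, h.not_gt, h.ne]
  · simp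
  · simp [h, h.not_gt, h.ne']

lemma sum_comp_bijective {α ι M : Type*} [Fintype ι] [AddCommMonoid M] {s : Finset α}
    {σ : ι → s} (hσ : Function.Bijective σ) (f : α → M) :
    ∑ j, f (σ j) = ∑ x ∈ s, f x := by
  rw [← sum_coe_sort s f]
  exact hσ.sum_comp fun x => f x

lemma tableau_exponent_identity {σ : Fin n → {x // x ∈ lam}} (hY : IsYoung lam)
    (hσ : Function.Bijective σ) :
    ∑ j : Fin n, (lmono (cx σ j + 1) (cy σ j + 1) -
        ∑ i ∈ univ.filter (· < j), quadr (cx σ j - cx σ i) (cy σ j - cy σ i)) =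
      ∑ x ∈ lam, (lmono ((arm lam x : ℤ) + 1) (-(leg lam x : ℤ)) +
          lmono (-(arm lam x : ℤ)) ((leg lam x : ℤ) + 1)) +
        ∑ _j : Fin n, quadr 0 0 +
        ∑ j : Fin n, (-lmono (-cx σ j) (-cy σ j) +
          ∑ i ∈ univ.filter (· < j), quadr (cx σ i - cx σ j) (cy σ i - cy σ j)) := by
  apply AddMonoidAlgebra.ofCoeff_injective
  simp only [AddMonoidAlgebra.ofCoeff_add, AddMonoidAlgebra.ofCoeff_sub,
    AddMonoidAlgebra.ofCoeff_neg, AddMonoidAlgebra.ofCoeff_sum, ofCoeff_lmono, ofCoeff_quadr]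
  have hshift : ∀ j, mon (cx σ j + 1) (cy σ j + 1) = mon 1 1 * mon (cx σ j) (cy σ j) :=
    fun j => by rw [mon_mul, add_comm 1, add_comm 1]
  have hpair : ∀ i j, mon (cx σ i - cx σ j) (cy σ i - cy σ j) =
      mon (cx σ i) (cy σ i) * mon (-cx σ j) (-cy σ j) := fun i j => by
    rw [mon_mul, sub_eq_add_neg, sub_eq_add_neg]
  have hdiag : ∀ j, mon (cx σ j) (cy σ j) * mon (-cx σ j) (-cy σ j) = 1 := fun j => by
    rw [← hpair, sub_self, sub_self, mon_zero_zero]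
  have hB : ∑ j, mon (cx σ j) (cy σ j) = cellSum lam :=
    sum_comp_bijective hσ fun x => mon x.1 x.2
  have hBbar : ∑ j, mon (-cx σ j) (-cy σ j) = cellSumInv lam :=
    sum_comp_bijective hσ fun x => mon (-x.1) (-x.2)
  have hsplit := sum_sum_lt_add_sum_sum_lt fun i j =>
    mon (cx σ i) (cy σ i) * mon (-cx σ j) (-cy σ j)
  simp only [hdiag, ← mul_sum, ← sum_mul, hB, hBbar, sum_const, card_univ,
    Fintype.card_fin] at hsplit
  have hH : ∑ x ∈ lam, (mon ((arm lam x : ℤ) + 1) (-(leg lam x : ℤ)) +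
      mon (-(arm lam x : ℤ)) ((leg lam x : ℤ) + 1)) = _ := hookSum_eq_of_isYoung hY
  simp only [hshift, hpair, mon_zero_zero, one_mul, ← sum_mul, sum_sub_distrib, sum_add_distrib,
    sum_neg_distrib, ← mul_sum, hB, hBbar, hH, sum_const, card_univ, Fintype.card_fin]
  linear_combination (-(1 - mon 1 0) * (1 - mon 0 1)) * hsplit

theorem statement2_general (n : ℕ) (lam : Finset (ℕ × ℕ)) (hY : IsYoung lam)
    (σ : Fin n → {x // x ∈ lam}) (hσ : IsSYT σ) :
    (∏ j : Fin n,
        Omega0 (lmono (cx σ j + 1) (cy σ j + 1) -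
          ∑ i ∈ Finset.univ.filter (· < j),
            quadr (cx σ j - cx σ i) (cy σ j - cy σ i))) =
      gPoly lam * ((1 - q * t) / ((1 - q) * (1 - t))) ^ n *
        ∏ j : Fin n,
          Omega0 (-lmono (-cx σ j) (-cy σ j) +
            ∑ i ∈ Finset.univ.filter (· < j),
              quadr (cx σ i - cx σ j) (cy σ i - cy σ j)) := by
  rw [← Omega0_sum, ← Omega0_sum, tableau_exponent_identity hY hσ.1, Omega0_add, Omega0_add,
    Omega0_armLeg_eq_gPoly, Omega0_sum, prod_const, Omega0_quadr_zero, card_univ, Fintype.card_fin]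

theorem statement2 (n : ℕ) (lam : Finset (ℕ × ℕ)) (hY : IsYoung lam)
    (hcard : lam.card = n) (σ : Fin n → {x // x ∈ lam}) (hσ : IsSYT σ) :
    (∏ j : Fin n,
        Omega0 (lmono (cx σ j + 1) (cy σ j + 1) -
          ∑ i ∈ Finset.univ.filter (· < j),
            quadr (cx σ j - cx σ i) (cy σ j - cy σ i))) =
      gPoly lam * ((1 - q * t) / ((1 - q) * (1 - t))) ^ n *
        ∏ j : Fin n,
          Omega0 (-lmono (-cx σ j) (-cy σ j) +
            ∑ i ∈ Finset.univ.filter (· < j),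
              quadr (cx σ i - cx σ j) (cy σ i - cy σ j)) :=
  statement2_general n lam hY σ hσ
end
end

section
/- For every natural number k, the following identity holds in the field ℚ(q,t): q^{k+1}/(1 − t/q) + t^{k+1}(1−q)(1−qt)/( (1−t)(1−t²)(1 − q/t) ) + t^k(1−qt²)/( (1−t²)(1 − 1/t) ) = q · Σ_{i=0}^{k} q^i t^{k−i}. -/
noncomputable section

lemma inj : Function.Injective (algebraMap (MvPolynomial (Fin 2) ℚ) K) :=
  IsFractionRing.injective _ _

lemma map_ne (p : MvPolynomial (Fin 2) ℚ) (hp : p ≠ 0) :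
    algebraMap (MvPolynomial (Fin 2) ℚ) K p ≠ 0 := by
  intro h
  exact hp (inj (by simpa using h))

lemma eval_ne {p : MvPolynomial (Fin 2) ℚ} (f : Fin 2 → ℚ)
    (h : MvPolynomial.eval f p ≠ 0) : p ≠ 0 := by
  intro hp; rw [hp] at h; simp at h

lemma hq : q ≠ 0 := map_ne _ (eval_ne (fun _ => 1) (by simp))
lemma ht : t ≠ 0 := map_ne _ (eval_ne (fun _ => 1) (by simp))
lemma hqt : q - t ≠ 0 := by
  have : q - t = algebraMap (MvPolynomial (Fin 2) ℚ) K (MvPolynomial.X 0 - MvPolynomial.X 1) := by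
    simp [q, t]
  rw [this]
  exact map_ne _ (eval_ne (fun i => if i = 0 then 2 else 1) (by simp; norm_num))
lemma h1t : (1 : K) - t ≠ 0 := by
  have : (1 : K) - t = algebraMap (MvPolynomial (Fin 2) ℚ) K (1 - MvPolynomial.X 1) := by
    simp [t]
  rw [this]
  exact map_ne _ (eval_ne (fun _ => 2) (by simp; norm_num))
lemma h1pt : (1 : K) + t ≠ 0 := by
  have : (1 : K) + t = algebraMap (MvPolynomial (Fin 2) ℚ) K (1 + MvPolynomial.X 1) := by
    simp [t]
  rw [this]
  exact map_ne _ (eval_ne (fun _ => 1) (by simp))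

set_option maxHeartbeats 2000000 in
theorem statement13 (k : ℕ) :
    q ^ (k + 1) / (1 - t / q) +
        t ^ (k + 1) * (1 - q) * (1 - q * t) / ((1 - t) * (1 - t ^ 2) * (1 - q / t)) +
        t ^ k * (1 - q * t ^ 2) / ((1 - t ^ 2) * (1 - 1 / t)) =
      q * ∑ i ∈ Finset.range (k + 1), q ^ i * t ^ (k - i) := by
  have hS : (∑ i ∈ Finset.range (k + 1), q ^ i * t ^ (k - i)) =
      (q ^ (k + 1) - t ^ (k + 1)) / (q - t) := by
    rw [eq_div_iff hqt, ← geom_sum₂_mul q t (k + 1)]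
    refine congrArg (· * (q - t)) (Finset.sum_congr rfl fun i hi => ?_)
    have : k + 1 - 1 - i = k - i := by omega
    rw [this]
  rw [hS]
  have htq : t - q ≠ 0 := by intro h; apply hqt; linear_combination -h
  have ht1 : t - 1 ≠ 0 := by intro h; apply h1t; linear_combination -h
  have h2 : (1 : K) - t ^ 2 = (1 - t) * (1 + t) := by ring
  have h1t2 : (1 : K) - t ^ 2 ≠ 0 := by rw [h2]; exact mul_ne_zero h1t h1pt
  have e1 : (1 : K) - t / q = (q - t) / q := by field_simp [hq]
  have e2 : (1 : K) - q / t = (t - q) / t := by field_simp [ht]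
  have e3 : (1 : K) - 1 / t = (t - 1) / t := by field_simp [ht]
  have hd1 : (1 : K) - t / q ≠ 0 := by rw [e1]; exact div_ne_zero hqt hq
  have hd2 : ((1 : K) - t) * (1 - t ^ 2) * (1 - q / t) ≠ 0 := by
    refine mul_ne_zero (mul_ne_zero h1t h1t2) ?_
    rw [e2]; exact div_ne_zero htq ht
  have hd3 : ((1 : K) - t ^ 2) * (1 - 1 / t) ≠ 0 := by
    refine mul_ne_zero h1t2 ?_
    rw [e3]; exact div_ne_zero ht1 ht
  rw [mul_comm q, ← mul_div_assoc, div_add_div _ _ hd1 hd2,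
    div_add_div _ _ (mul_ne_zero hd1 hd2) hd3,
    div_eq_div_iff (mul_ne_zero (mul_ne_zero hd1 hd2) hd3) hqt, e1, e2, e3]
  field_simp [hq, ht]
  ring
end
end
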